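/- Let p_0,...,p_n ∈ [-1,1] be distinct nodes with Lagrange basis polynomials l_j, and set w_j = ∫_{-1}^{1} l_j(x) dx. If the quadrature rule Q(f) = ∑_{j=0}^n w_j f(p_j) is exact for all polynomials of degree at most 2n+1, then the nodes p_j are the roots of the degree-(n+1) orthogonal polynomial with respect to Lebesgue measure on [-1,1] (i.e., the Legendre polynomial of degree n+1 up to normalization). -/

import Mathlib

/-! A quadrature rule exact in degree `2n+1` integrates `N * Q` exactly for the node polynomial
`N = ∏ j, (X - p j)` of degree `n+1` and any `Q` of degree `≤ n`; but `N` vanishes at every node,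
so the quadrature sum, and hence the integral, is zero. -/

/-- The Lagrange basis polynomial `l_j(x) = ∏_{h ≠ j} (x - p_h)/(p_j - p_h)`. -/
noncomputable def lagBasis {n : ℕ} (p : Fin (n+1) → ℝ) (j : Fin (n+1)) : Polynomial ℝ :=
  ∏ h ∈ Finset.univ.filter (fun h => h ≠ j),
    Polynomial.C ((p j - p h)⁻¹) * (Polynomial.X - Polynomial.C (p h))

open Polynomial Finset Lagrange

theorem Lagrange.sum_mul_eval_nodal_mul_eq_zero {R ι : Type*} [CommRing R] (s : Finset ι)
    (v w : ι → R) (Q : R[X]) : ∑ i ∈ s, w i * (nodal s v * Q).eval (v i) = 0 :=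
  sum_eq_zero fun i hi => by rw [eval_mul, eval_nodal_at_node hi, zero_mul, mul_zero]

theorem Lagrange.integral_eval_nodal_mul_eq_zero_of_exact {ι : Type*} (s : Finset ι)
    (v w : ι → ℝ) {a b : ℝ} {d : ℕ}
    (hexact : ∀ Q : ℝ[X], Q.natDegree ≤ d → ∫ x in a..b, Q.eval x = ∑ i ∈ s, w i * Q.eval (v i))
    {Q : ℝ[X]} (hQ : #s + Q.natDegree ≤ d) :
    ∫ x in a..b, (nodal s v).eval x * Q.eval x = 0 := by
  have hdeg : (nodal s v * Q).natDegree ≤ d :=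
    natDegree_mul_le.trans (by rwa [natDegree_nodal])
  rw [← sum_mul_eval_nodal_mul_eq_zero s v w Q]
  simpa only [eval_mul] using hexact _ hdeg

theorem quadrature_exact_implies_legendre_nodes_general (n : ℕ) (p : Fin (n+1) → ℝ)
    (w : Fin (n+1) → ℝ)
    (hexact : ∀ Q : Polynomial ℝ, Q.natDegree ≤ 2*n+1 →
      ∫ x in (-1:ℝ)..1, Q.eval x = ∑ j, w j * Q.eval (p j)) :
    ∀ Q : Polynomial ℝ, Q.natDegree ≤ n →
      ∫ x in (-1:ℝ)..1, (∏ j, (Polynomial.X - Polynomial.C (p j))).eval x * Q.eval x = 0 := by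
  intro Q hQ
  refine integral_eval_nodal_mul_eq_zero_of_exact univ p w hexact ?_
  rw [card_univ, Fintype.card_fin]
  omega

/-- If the interpolatory quadrature rule with distinct nodes
`p_0,…,p_n ∈ [-1,1]` and weights `w_j = ∫_{-1}^1 l_j` is exact for all polynomials of
degree at most `2n+1`, then the node polynomial `∏_j (X - p_j)` is orthogonal in
`L²([-1,1])` to all polynomials of degree at most `n`; i.e. the nodes are the roots of
the degree-`(n+1)` orthogonal (Legendre, up to normalization) polynomial. -/
theorem quadrature_exact_implies_legendre_nodes (n : ℕ) (p : Fin (n+1) → ℝ)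
    (hinj : Function.Injective p) (hmem : ∀ j, p j ∈ Set.Icc (-1:ℝ) 1)
    (w : Fin (n+1) → ℝ)
    (hw : ∀ j, w j = ∫ x in (-1:ℝ)..1, (lagBasis p j).eval x)
    (hexact : ∀ Q : Polynomial ℝ, Q.natDegree ≤ 2*n+1 →
      ∫ x in (-1:ℝ)..1, Q.eval x = ∑ j, w j * Q.eval (p j)) :
    ∀ Q : Polynomial ℝ, Q.natDegree ≤ n →
      ∫ x in (-1:ℝ)..1, (∏ j, (Polynomial.X - Polynomial.C (p j))).eval x * Q.eval x = 0 :=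
  quadrature_exact_implies_legendre_nodes_general n p w hexact
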